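/- If E is a Pauli envelope for loss configuration l₁ in circuit C₀, and for each i, E(l_i) is a Pauli envelope for l_i in the circuit C_{i-1} obtained by removing gates affected by losses l₁,...,l_{i-1}, with S_{C_i}(p, ∅) = S_{C_{i-1}}(p, l_i), then the composition E(l) = E(l₁) ⊕ E(l₂) ⊕ ⋯ ⊕ E(l_k) is a Pauli envelope for the combined loss configuration l = l₁ ⊕ ⋯ ⊕ l_k in C₀, i.e., S_{C₀}(p, l) ⊆ S_{C₀}(p ⊕ E(l), ∅) for all p. -/
import Mathlib


open scoped Pointwise

/-- Composition of Pauli envelopes for multiple losses.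
`S i P l` is the outcome set of circuit `C_i` with Pauli configuration set
`P` and loss configuration `l` (`0` denoting no loss). Given the
circuit-reduction chain `S_{C_{i+1}}(P, ∅) = S_{C_i}(P, l_i)`, that each
`E i` is a Pauli envelope for `l i` in circuit `C_i`, and that `S_{C_0}`
with the combined loss equals `S_{C_k}` with no loss, the pointwise sum
`∑ i, E i` is a Pauli envelope for `l = ∑ i, l i` in `C_0`. -/
theorem stmt2 {Pc Lc X : Type*} [AddCommGroup Pc] [AddCommMonoid Lc]
    (k : ℕ) (S : ℕ → Set Pc → Lc → Set X)
    -- monotonicity in the Pauli configuration set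
    (hmono : ∀ (i : ℕ) (P P' : Set Pc) (l : Lc), P ⊆ P' → S i P l ⊆ S i P' l)
    -- outcomes decompose over single Pauli configurations
    (hunion : ∀ (i : ℕ) (P : Set Pc) (l : Lc),
      S i P l = ⋃ p ∈ P, S i {p} l)
    (l : Fin k → Lc) (E : Fin k → Set Pc)
    -- circuit reduction: S_{C_{i+1}}(P, ∅) = S_{C_i}(P, l_i)
    (hchain : ∀ (i : Fin k) (P : Set Pc), S (i + 1) P 0 = S i P (l i))
    -- E i is a Pauli envelope for l i in circuit C_i
    (henv : ∀ (i : Fin k) (p : Pc), S i {p} (l i) ⊆ S i ({p} + E i) 0)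
    -- the full loss configuration reduces C_0 to C_k
    (hfull : ∀ P : Set Pc, S 0 P (∑ i, l i) = S k P 0) :
    ∀ p : Pc, S 0 {p} (∑ i, l i) ⊆ S 0 ({p} + ∑ i, E i) 0 := by
  -- one step of the chain, for arbitrary Pauli sets
  have step : ∀ (j : ℕ) (hj : j < k) (Q : Set Pc),
      S (j + 1) Q 0 ⊆ S j (Q + E ⟨j, hj⟩) 0 := by
    intro j hj Q x hx
    rw [hchain ⟨j, hj⟩] at hx
    simp only at hx
    rw [hunion] at hx
    simp only [Set.mem_iUnion] at hx
    obtain ⟨q, hqQ, hxq⟩ := hx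
    exact hmono j ({q} + E ⟨j, hj⟩) (Q + E ⟨j, hj⟩) 0
      (Set.add_subset_add_right (Set.singleton_subset_iff.2 hqQ))
      (henv ⟨j, hj⟩ q hxq)
  -- tail sums of envelopes
  set F : ℕ → Set Pc := fun j =>
    ∑ i ∈ Finset.univ.filter (fun i : Fin k => j ≤ (i : ℕ)), E i with hF
  have hFk : F k = 0 := by
    simp only [hF]
    rw [Finset.filter_false_of_mem, Finset.sum_empty]
    intro i _
    exact Nat.not_le.2 i.isLt
  have hFstep : ∀ (j : ℕ) (hj : j < k), F j = E ⟨j, hj⟩ + F (j + 1) := by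
    intro j hj
    simp only [hF]
    have hset : Finset.univ.filter (fun i : Fin k => j ≤ (i : ℕ)) =
        insert ⟨j, hj⟩ (Finset.univ.filter (fun i : Fin k => j + 1 ≤ (i : ℕ))) := by
      ext i
      simp only [Finset.mem_filter, Finset.mem_univ, true_and, Finset.mem_insert]
      constructor
      · intro h
        rcases eq_or_lt_of_le h with h' | h'
        · left; exact Fin.ext h'.symm
        · right; simpa using h'
      · rintro (rfl | h)
        · exact le_refl j
        · omega
    rw [hset, Finset.sum_insert]
    simp only [Finset.mem_filter, Finset.mem_univ, true_and]
    omega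
  have main : ∀ m : ℕ, m ≤ k → ∀ p : Pc,
      S k {p} 0 ⊆ S (k - m) ({p} + F (k - m)) 0 := by
    intro m
    induction m with
    | zero =>
      intro _ p
      simp only [Nat.sub_zero, hFk, add_zero]
      exact subset_rfl
    | succ m ih =>
      intro hm p
      have hmk : m ≤ k := Nat.le_of_succ_le hm
      have hj : k - (m + 1) < k := by omega
      have hkm : k - m = (k - (m + 1)) + 1 := by omega
      set j := k - (m + 1) with hjdef
      calc S k {p} 0 ⊆ S (k - m) ({p} + F (k - m)) 0 := ih hmk p
        _ = S (j + 1) ({p} + F (j + 1)) 0 := by rw [hkm]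
        _ ⊆ S j (({p} + F (j + 1)) + E ⟨j, hj⟩) 0 := step j hj _
        _ = S j ({p} + F j) 0 := by
            rw [hFstep j hj, add_comm (E ⟨j, hj⟩) (F (j + 1)), add_assoc]
  intro p x hx
  rw [hfull] at hx
  have h0 : F 0 = ∑ i, E i := by
    simp [hF]
  have := main k (le_refl k) p (by simpa using hx)
  rw [Nat.sub_self, h0] at this
  exact this
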